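/- Every p-coloring automorphism of ℤ/p (p an odd prime) is of the form f(x) = λx + μ for some unit λ and some μ in ℤ/p; that is, any bijection f : ℤ/p → ℤ/p satisfying f(2b - a) = 2f(b) - f(a) for all a, b is an affine map x ↦ λx + μ with λ invertible. -/

import Mathlib

/-!
Put `f₀ x := f x - f 0`. Since `2` is invertible, every `x + y` is `2 b` for `b = (x + y) / 2`, and
the coloring identity at `(0, b)` and at `(y, b)` gives `f (x + y) + f 0 = f x + f y`; so `f₀` is
additive. An additive self-map of `ℤ/p` is multiplication by `f₀ 1`, and `f₀ 1` is a unit because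
`f` is surjective.
-/

theorem map_add_add_map_zero_of_map_two_mul_sub {R : Type*} [Ring R] (h2 : IsUnit (2 : R))
    {f : R → R} (hcol : ∀ a b : R, f (2 * b - a) = 2 * f b - f a) (x y : R) :
    f (x + y) + f 0 = f x + f y := by
  obtain ⟨u, hu⟩ := h2
  set b := (↑u⁻¹ : R) * (x + y)
  have hb : 2 * b = x + y := by rw [← hu, Units.mul_inv_cancel_left]
  have hxy : f (x + y) = 2 * f b - f 0 := by simpa [hb] using hcol 0 b
  have hx : f x = 2 * f b - f y := by simpa [hb] using hcol y b
  rw [hxy, hx]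
  abel

theorem ZMod.eq_mul_add_of_map_add_add_map_zero {n : ℕ} {f : ZMod n → ZMod n}
    (hf : ∀ x y, f (x + y) + f 0 = f x + f y) (x : ZMod n) :
    f x = (f 1 - f 0) * x + f 0 := by
  let g : ZMod n →+ ZMod n :=
    AddMonoidHom.mk' (fun x => f x - f 0) fun x y => by linear_combination hf x y
  have hg : g x = (x.cast : ℤ) • g 1 := by
    rw [← map_zsmul, zsmul_one, ZMod.intCast_zmod_cast]
  change f x - f 0 = (x.cast : ℤ) • (f 1 - f 0) at hg
  rw [zsmul_eq_mul, ZMod.intCast_zmod_cast] at hg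
  linear_combination hg

theorem isUnit_of_surjective_mul_add {R : Type*} [CommRing R] {c m : R}
    (hsurj : Function.Surjective fun x => c * x + m) : IsUnit c := by
  obtain ⟨x, hx⟩ := hsurj (1 + m)
  exact IsUnit.of_mul_eq_one x (add_right_cancel hx)

theorem stmt_1_general (p : ℕ) (hodd : Odd p)
    (f : ZMod p → ZMod p) (hbij : Function.Bijective f)
    (hcol : ∀ a b : ZMod p, f (2 * b - a) = 2 * f b - f a) :
    ∃ (l : (ZMod p)ˣ) (m : ZMod p), ∀ x, f x = (l : ZMod p) * x + m := by
  have h2 : IsUnit (2 : ZMod p) := by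
    exact_mod_cast (ZMod.isUnit_iff_coprime 2 p).mpr hodd.coprime_two_left
  have hf : ∀ x, f x = (f 1 - f 0) * x + f 0 :=
    ZMod.eq_mul_add_of_map_add_add_map_zero (map_add_add_map_zero_of_map_two_mul_sub h2 hcol)
  have hunit : IsUnit (f 1 - f 0) :=
    isUnit_of_surjective_mul_add (m := f 0) (by simpa only [← funext hf] using hbij.2)
  exact ⟨hunit.unit, f 0, hf⟩

theorem stmt_1 (p : ℕ) (hp : p.Prime) (hodd : Odd p)
    (f : ZMod p → ZMod p) (hbij : Function.Bijective f)
    (hcol : ∀ a b : ZMod p, f (2 * b - a) = 2 * f b - f a) :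
    ∃ (l : (ZMod p)ˣ) (m : ZMod p), ∀ x, f x = (l : ZMod p) * x + m :=
  stmt_1_general p hodd f hbij hcol
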